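/- In the gadget network built from a directed graph D, if an outcome A admits no blocking path or cycle, then A contains no contract of Z, and the sets Q = {v ∈ V : a_v a'_v ∉ A} and R = V \ Q are both acyclic in D. -/

import Mathlib

open Finset

/-- A trading network: firms `F`, contracts `X`, seller/buyer maps, and choice functions. -/
structure TradingNetwork (F X : Type) where
  sell : X → F
  buy  : X → F
  C : F → Finset X → Finset X

namespace TradingNetwork

variable {F X : Type} [DecidableEq F] [DecidableEq X] [Fintype X]

/-- The contracts in `Y` involving firm `f`. -/
def own (N : TradingNetwork F X) (f : F) (Y : Finset X) : Finset X :=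
  Y.filter fun x => N.sell x = f ∨ N.buy x = f

/-- Upstream contracts of `f` (contracts where `f` is the buyer). -/
def XB (N : TradingNetwork F X) (f : F) : Finset X := univ.filter fun x => N.buy x = f

/-- Downstream contracts of `f` (contracts where `f` is the seller). -/
def XS (N : TradingNetwork F X) (f : F) : Finset X := univ.filter fun x => N.sell x = f

/-- A terminal agent: a terminal seller (no upstream contracts) or terminal buyer. -/
def Terminal (N : TradingNetwork F X) (f : F) : Prop := N.XB f = ∅ ∨ N.XS f = ∅

/-- `S` consists of the `k` most preferred elements of `Y` according to the
rank function `r` (lower rank = more preferred). -/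
def IsTop (r : X → ℕ) (k : ℕ) (Y S : Finset X) : Prop :=
  S ⊆ Y ∧ S.card = k ∧ ∀ x ∈ S, ∀ y ∈ Y, y ∉ S → r x < r y

/-- The choice functions of `N` are flow-based with respect to the preference ranks
`rkB` (over upstream contracts) and `rkS` (over downstream contracts): terminal agents
accept everything, and a non-terminal agent offered upstream contracts `Y ∩ XB f` and
downstream contracts `Y ∩ XS f` chooses its `k = min (|Y ∩ XB f|) (|Y ∩ XS f|)` most
preferred contracts on each side. -/
structure FlowBased (N : TradingNetwork F X) (rkB rkS : F → X → ℕ) : Prop where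
  injB : ∀ f, ∀ x ∈ N.XB f, ∀ y ∈ N.XB f, rkB f x = rkB f y → x = y
  injS : ∀ f, ∀ x ∈ N.XS f, ∀ y ∈ N.XS f, rkS f x = rkS f y → x = y
  C_own : ∀ f Y, N.C f Y ⊆ N.own f Y
  terminal_accepts : ∀ f, N.Terminal f → ∀ Y, N.C f Y = N.own f Y
  top_choice : ∀ f, ¬ N.Terminal f → ∀ Y : Finset X,
      IsTop (rkB f) (min (Y ∩ N.XB f).card (Y ∩ N.XS f).card)
        (Y ∩ N.XB f) (N.C f Y ∩ N.XB f)
    ∧ IsTop (rkS f) (min (Y ∩ N.XB f).card (Y ∩ N.XS f).card)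
        (Y ∩ N.XS f) (N.C f Y ∩ N.XS f)

/-- A flow network: a trading network with no self-loop contracts, flow-based choice
functions, and exactly two terminal agents. -/
instance (N : TradingNetwork F X) : DecidablePred N.Terminal := fun f =>
  decidable_of_iff (N.XB f = ∅ ∨ N.XS f = ∅) Iff.rfl

def IsFlowNetwork [Fintype F] (N : TradingNetwork F X) (rkB rkS : F → X → ℕ) : Prop :=
  (∀ x, N.sell x ≠ N.buy x) ∧ N.FlowBased rkB rkS ∧ Fintype.card {f // N.Terminal f} = 2

/-- An outcome is acceptable (individually rational for every firm). -/
def Acceptable (N : TradingNetwork F X) (A : Finset X) : Prop :=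
  ∀ f, N.C f (N.own f A) = N.own f A

/-- `B` is `(A,f)`-acceptable: `f` chooses all its contracts in `B` when offered `B` alongside `A`. -/
def AccAlongside (N : TradingNetwork F X) (A B : Finset X) (f : F) : Prop :=
  N.own f B ⊆ N.C f (N.own f A ∪ N.own f B)

/-- Firm `f` is involved in the contract set `B`. -/
def Involved (N : TradingNetwork F X) (B : Finset X) (f : F) : Prop := (N.own f B).Nonempty

/-- `Z` is a blocking set for the outcome `A`. -/
def Blocks (N : TradingNetwork F X) (A Z : Finset X) : Prop :=
  Z.Nonempty ∧ Disjoint Z A ∧ ∀ f, N.Involved Z f → N.AccAlongside A Z f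

/-- A stable outcome: acceptable and admitting no blocking set. -/
def Stable (N : TradingNetwork F X) (A : Finset X) : Prop :=
  N.Acceptable A ∧ ¬ ∃ Z, N.Blocks A Z

/-- A path: consecutive contracts, with all involved firms distinct. -/
def IsPath (N : TradingNetwork F X) (l : List X) : Prop :=
  ∃ h : l ≠ [], l.Chain' (fun x y => N.buy x = N.sell y) ∧
    (N.sell (l.head h) :: l.map N.buy).Nodup

/-- A cycle: consecutive contracts with distinct sellers, returning to the start. -/
def IsCycle (N : TradingNetwork F X) (l : List X) : Prop :=
  ∃ h : l ≠ [], l.Chain' (fun x y => N.buy x = N.sell y) ∧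
    (l.map N.sell).Nodup ∧ N.buy (l.getLast h) = N.sell (l.head h)

/-- `l` is a blocking path or blocking cycle for the outcome `A`. -/
def BlockingPathOrCycle (N : TradingNetwork F X) (A : Finset X) (l : List X) : Prop :=
  (N.IsPath l ∨ N.IsCycle l) ∧ Disjoint l.toFinset A ∧
    ∀ f, N.Involved l.toFinset f → N.AccAlongside A l.toFinset f

/-- A path-or-cycle-stable outcome. -/
def PathOrCycleStable (N : TradingNetwork F X) (A : Finset X) : Prop :=
  N.Acceptable A ∧ ¬ ∃ l : List X, N.BlockingPathOrCycle A l

/-- Chosen upstream contracts of `f` when offered upstream contracts `Y` and downstream `Z`. -/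
def CB (N : TradingNetwork F X) (f : F) (Y Z : Finset X) : Finset X :=
  N.C f ((Y ∩ N.XB f) ∪ (Z ∩ N.XS f)) ∩ N.XB f

/-- Chosen downstream contracts of `f` when offered downstream `Z` and upstream `Y`. -/
def CS (N : TradingNetwork F X) (f : F) (Z Y : Finset X) : Finset X :=
  N.C f ((Y ∩ N.XB f) ∪ (Z ∩ N.XS f)) ∩ N.XS f

/-- Rejected upstream contracts. -/
def RB (N : TradingNetwork F X) (f : F) (Y Z : Finset X) : Finset X :=
  (Y ∩ N.XB f) \ N.CB f Y Z

/-- Rejected downstream contracts. -/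
def RS (N : TradingNetwork F X) (f : F) (Z Y : Finset X) : Finset X :=
  (Z ∩ N.XS f) \ N.CS f Z Y

/-- Full substitutability (same-side substitutability and cross-side complementarity)
of the choice function of firm `f`. -/
def FullySubstitutableAt (N : TradingNetwork F X) (f : F) : Prop :=
  ∀ Y' Y Z' Z : Finset X, Y' ⊆ Y → Z' ⊆ Z →
    N.RB f Y' Z ⊆ N.RB f Y Z ∧ N.RS f Z' Y ⊆ N.RS f Z Y ∧
    N.RB f Y Z ⊆ N.RB f Y Z' ∧ N.RS f Z Y ⊆ N.RS f Z Y'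

/-- Full substitutability of all choice functions. -/
def FullySubstitutable (N : TradingNetwork F X) : Prop :=
  ∀ f, N.FullySubstitutableAt f

/-- The irrelevance of rejected contracts condition for the choice function of firm `f`. -/
def IRCAt (N : TradingNetwork F X) (f : F) : Prop :=
  ∀ Y Z : Finset X, N.C f Y ⊆ Z → Z ⊆ Y → N.C f Z = N.C f Y

/-- The irrelevance of rejected contracts condition. -/
def IRC (N : TradingNetwork F X) : Prop := ∀ f, N.IRCAt f

end TradingNetwork

/-! ### The gadget network built from a directed graph -/

/-- The induced subgraph on the vertex set `U` contains a directed cycle. -/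
def HasCycleIn {V : Type} [DecidableEq V] (adj : V → V → Bool) (U : Finset V) : Prop :=
  ∃ l : List V, ∃ h : l ≠ [], l.Nodup ∧ (∀ v ∈ l, v ∈ U) ∧
    l.Chain' (fun u v => adj u v = true) ∧ adj (l.getLast h) (l.head h) = true

/-- Firms of the gadget network: the two terminal firms `s = Sum.inl false` and
`t = Sum.inl true`, and for each vertex `v` the six firms
`s_v = (v,0)`, `a_v = (v,1)`, `a'_v = (v,2)`, `b_v = (v,3)`, `b'_v = (v,4)`, `t_v = (v,5)`. -/
abbrev GFirm (V : Type) : Type := Bool ⊕ (V × Fin 6)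

/-- Contracts of the gadget network: for each vertex `v` the eight contracts
`s s_v = (v,0)`, `s_v a_v = (v,1)`, `s_v b_v = (v,2)`, `a_v a'_v = (v,3)`, `b_v b'_v = (v,4)`,
`a'_v t_v = (v,5)`, `b'_v t_v = (v,6)`, `t_v t = (v,7)`; and for each arc `uv` of the
digraph the two contracts `a'_u a_v` (tagged `false`) and `b'_u b_v` (tagged `true`). -/
abbrev GContract (V : Type) (adj : V → V → Bool) : Type :=
  (V × Fin 8) ⊕ (({p : V × V // adj p.1 p.2 = true}) × Bool)

/-- Seller of each gadget contract. -/
def gSell {V : Type} (adj : V → V → Bool) : GContract V adj → GFirm V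
  | Sum.inl (v, i) =>
      ![Sum.inl false, Sum.inr (v, 0), Sum.inr (v, 0), Sum.inr (v, 1), Sum.inr (v, 3),
        Sum.inr (v, 2), Sum.inr (v, 4), Sum.inr (v, 5)] i
  | Sum.inr (⟨(u, _), _⟩, false) => Sum.inr (u, 2)
  | Sum.inr (⟨(u, _), _⟩, true) => Sum.inr (u, 4)

/-- Buyer of each gadget contract. -/
def gBuy {V : Type} (adj : V → V → Bool) : GContract V adj → GFirm V
  | Sum.inl (v, i) =>
      ![Sum.inr (v, 0), Sum.inr (v, 1), Sum.inr (v, 3), Sum.inr (v, 2), Sum.inr (v, 4),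
        Sum.inr (v, 5), Sum.inr (v, 5), Sum.inl true] i
  | Sum.inr (⟨(_, v), _⟩, false) => Sum.inr (v, 1)
  | Sum.inr (⟨(_, v), _⟩, true) => Sum.inr (v, 3)

/-- The gadget trading network built from the digraph `adj`, with choice functions `C`. -/
def gadgetNet {V : Type} (adj : V → V → Bool)
    (C : GFirm V → Finset (GContract V adj) → Finset (GContract V adj)) :
    TradingNetwork (GFirm V) (GContract V adj) :=
  ⟨gSell adj, gBuy adj, C⟩

/-- The preference restrictions of the reduction: each `s_v` prefers `s_v a_v` to `s_v b_v`;
each `t_v` prefers `b'_v t_v` to `a'_v t_v`; and every firm prefers its gadget (non-`Z`)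
contracts to its arc (`Z`) contracts, on both sides. -/
structure GadgetPrefs {V : Type} [DecidableEq V] [Fintype V] (adj : V → V → Bool)
    (C : GFirm V → Finset (GContract V adj) → Finset (GContract V adj))
    (rkB rkS : GFirm V → GContract V adj → ℕ) : Prop where
  sv_pref : ∀ v : V, rkS (Sum.inr (v, 0)) (Sum.inl (v, 1)) < rkS (Sum.inr (v, 0)) (Sum.inl (v, 2))
  tv_pref : ∀ v : V, rkB (Sum.inr (v, 5)) (Sum.inl (v, 6)) < rkB (Sum.inr (v, 5)) (Sum.inl (v, 5))
  nonZ_first_B : ∀ f : GFirm V, ∀ x ∈ (gadgetNet adj C).XB f, ∀ y ∈ (gadgetNet adj C).XB f,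
    x.isLeft → y.isRight → rkB f x < rkB f y
  nonZ_first_S : ∀ f : GFirm V, ∀ x ∈ (gadgetNet adj C).XS f, ∀ y ∈ (gadgetNet adj C).XS f,
    x.isLeft → y.isRight → rkS f x < rkS f y

/-- Whether a gadget contract belongs to the outcome `A(Q)` of the reduction. -/
def gOutcomeMem {V : Type} [DecidableEq V] (Q : Finset V) {adj : V → V → Bool} :
    GContract V adj → Bool
  | Sum.inl (v, i) =>
      if v ∈ Q then i = 0 ∨ i = 2 ∨ i = 4 ∨ i = 6 ∨ i = 7
      else i = 0 ∨ i = 1 ∨ i = 3 ∨ i = 5 ∨ i = 7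
  | Sum.inr _ => false

/-- The outcome `A(Q)` of the reduction: for `v ∈ Q` the contracts
`{s s_v, s_v b_v, b_v b'_v, b'_v t_v, t_v t}`, and for `v ∉ Q` the contracts
`{s s_v, s_v a_v, a_v a'_v, a'_v t_v, t_v t}`. -/
def gOutcome {V : Type} [DecidableEq V] [Fintype V] (adj : V → V → Bool) (Q : Finset V) :
    Finset (GContract V adj) :=
  Finset.univ.filter fun x => gOutcomeMem Q x = true

/-!
Flow-based choice makes every non-terminal firm of an acceptable outcome `A` balanced, and a
flow-based firm offered a balanced set of contracts accepts all of them; since a cycle is balanced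
at each of its firms, any cycle of the network that avoids `A` and the terminals blocks `A`.

If `A` contained an arc contract `a'_u a_v`, it would be the only contract `a_v` buys, and
`s_v a_v` (preceded by `s s_v` if `s_v` is idle) would block, because `a_v` prefers it to every
arc and `s_v` prefers it to `s_v b_v`; dually for `b'_u b_v` with `b'_u t_u`. With no arc
contracts in `A`, a directed cycle `v_1 ⋯ v_k` of `D[Q]` lifts to the blocking cycle
`a_{v_1} a'_{v_1} a_{v_2} ⋯ a'_{v_k} a_{v_1}`. For `v ∈ R`, conservation at `a_v`, `s_v` and `b_v`
gives `b_v b'_v ∉ A`, so a cycle of `D[R]` lifts to the corresponding `b`-cycle.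
-/

lemma List.IsChain.map_eq_rotate_map {α β : Type} {g h : α → β} {l : List α}
    (hl : l.IsChain fun x y => g x = h y) (hne : l ≠ [])
    (hcl : g (l.getLast hne) = h (l.head hne)) : l.map g = (l.map h).rotate 1 := by
  obtain ⟨x, t, rfl⟩ := List.exists_cons_of_ne_nil hne
  simp only [List.map_cons, List.head_cons] at hcl ⊢
  rw [List.rotate_cons_succ, List.rotate_zero, ← hcl]
  clear hcl
  induction t generalizing x with
  | nil => rfl
  | cons y t ih =>
    obtain ⟨hxy, hl⟩ := List.isChain_cons_cons.1 hl
    rw [List.getLast_cons (List.cons_ne_nil _ _), List.map_cons, List.map_cons, List.cons_append,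
      ← ih y hl (List.cons_ne_nil _ _), hxy]

namespace TradingNetwork

lemma IsTop.eq_of_card_eq {X : Type} {r : X → ℕ} {Y S : Finset X} (h : IsTop r Y.card Y S) :
    S = Y :=
  eq_of_subset_of_card_le h.1 h.2.1.ge

lemma IsTop.mem_of_forall_lt {X : Type} {r : X → ℕ} {k : ℕ} {Y S : Finset X} {x : X}
    (h : IsTop r k Y S) (hk : 0 < k) (hx : x ∈ Y) (hmin : ∀ y ∈ Y, y ≠ x → r x < r y) :
    x ∈ S := by
  by_contra hxS
  obtain ⟨s, hs⟩ := card_pos.1 (h.2.1 ▸ hk)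
  exact (h.2.2 s hs x hx hxS).asymm (hmin s (h.1 hs) fun e => hxS (e ▸ hs))

@[simp] lemma mem_own {F X : Type} [DecidableEq F] {N : TradingNetwork F X} {f : F}
    {Y : Finset X} {x : X} : x ∈ N.own f Y ↔ x ∈ Y ∧ (N.sell x = f ∨ N.buy x = f) := by
  simp [own]

section Sides

variable {F X : Type} [DecidableEq F] [Fintype X] {N : TradingNetwork F X} {f : F} {x : X}

@[simp] lemma mem_XB : x ∈ N.XB f ↔ N.buy x = f := by simp [XB]

@[simp] lemma mem_XS : x ∈ N.XS f ↔ N.sell x = f := by simp [XS]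

variable [DecidableEq X]

lemma own_union_own_inter_XB (A B : Finset X) :
    (N.own f A ∪ N.own f B) ∩ N.XB f = A ∩ N.XB f ∪ B ∩ N.XB f := by
  ext x; simp only [mem_inter, mem_union, mem_own, mem_XB]; tauto

lemma own_union_own_inter_XS (A B : Finset X) :
    (N.own f A ∪ N.own f B) ∩ N.XS f = A ∩ N.XS f ∪ B ∩ N.XS f := by
  ext x; simp only [mem_inter, mem_union, mem_own, mem_XS]; tauto

end Sides

namespace FlowBased

variable {F X : Type} [DecidableEq F] [DecidableEq X] [Fintype X] {N : TradingNetwork F X}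
  {rkB rkS : F → X → ℕ} {f : F} {A Y : Finset X} {x : X}

lemma card_inter_XB_eq (hFB : N.FlowBased rkB rkS) (hf : ¬ N.Terminal f)
    (hA : N.C f (N.own f A) = N.own f A) : (A ∩ N.XB f).card = (A ∩ N.XS f).card := by
  obtain ⟨hB, hS⟩ := hFB.top_choice f hf (N.own f A)
  have hXB : N.own f A ∩ N.XB f = A ∩ N.XB f := by simpa using own_union_own_inter_XB A A
  have hXS : N.own f A ∩ N.XS f = A ∩ N.XS f := by simpa using own_union_own_inter_XS A A
  rw [hA, hXB, hXS] at hB hS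
  have := hB.2.1
  have := hS.2.1
  omega

lemma exists_sell_eq_of_buy_eq (hFB : N.FlowBased rkB rkS) (hf : ¬ N.Terminal f)
    (hA : N.Acceptable A) (hx : x ∈ A) (hxf : N.buy x = f) : ∃ y ∈ A, N.sell y = f := by
  have hpos : 0 < (A ∩ N.XS f).card := by
    rw [← hFB.card_inter_XB_eq hf (hA f)]
    exact card_pos.2 ⟨x, mem_inter.2 ⟨hx, mem_XB.2 hxf⟩⟩
  obtain ⟨y, hy⟩ := card_pos.1 hpos
  exact ⟨y, (mem_inter.1 hy).1, mem_XS.1 (mem_inter.1 hy).2⟩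

lemma exists_buy_eq_of_sell_eq (hFB : N.FlowBased rkB rkS) (hf : ¬ N.Terminal f)
    (hA : N.Acceptable A) (hx : x ∈ A) (hxf : N.sell x = f) : ∃ y ∈ A, N.buy y = f := by
  have hpos : 0 < (A ∩ N.XB f).card := by
    rw [hFB.card_inter_XB_eq hf (hA f)]
    exact card_pos.2 ⟨x, mem_inter.2 ⟨hx, mem_XS.2 hxf⟩⟩
  obtain ⟨y, hy⟩ := card_pos.1 hpos
  exact ⟨y, (mem_inter.1 hy).1, mem_XB.1 (mem_inter.1 hy).2⟩

lemma eq_of_buy_eq (hFB : N.FlowBased rkB rkS) (hf : ¬ N.Terminal f) (hA : N.Acceptable A)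
    {c y : X} (hc : ∀ z, N.sell z = f → z = c) (hx : x ∈ A) (hy : y ∈ A)
    (hxf : N.buy x = f) (hyf : N.buy y = f) : x = y := by
  have hS : (A ∩ N.XS f).card ≤ 1 :=
    card_le_one.2 fun a ha b hb => (hc a (mem_XS.1 (mem_inter.1 ha).2)).trans
      (hc b (mem_XS.1 (mem_inter.1 hb).2)).symm
  rw [← hFB.card_inter_XB_eq hf (hA f)] at hS
  exact card_le_one.1 hS x (mem_inter.2 ⟨hx, mem_XB.2 hxf⟩) y (mem_inter.2 ⟨hy, mem_XB.2 hyf⟩)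

lemma eq_of_sell_eq (hFB : N.FlowBased rkB rkS) (hf : ¬ N.Terminal f) (hA : N.Acceptable A)
    {c y : X} (hc : ∀ z, N.buy z = f → z = c) (hx : x ∈ A) (hy : y ∈ A)
    (hxf : N.sell x = f) (hyf : N.sell y = f) : x = y := by
  have hB : (A ∩ N.XB f).card ≤ 1 :=
    card_le_one.2 fun a ha b hb => (hc a (mem_XB.1 (mem_inter.1 ha).2)).trans
      (hc b (mem_XB.1 (mem_inter.1 hb).2)).symm
  rw [hFB.card_inter_XB_eq hf (hA f)] at hB
  exact card_le_one.1 hB x (mem_inter.2 ⟨hx, mem_XS.2 hxf⟩) y (mem_inter.2 ⟨hy, mem_XS.2 hyf⟩)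

lemma mem_C_of_buy_eq_of_forall_lt (hFB : N.FlowBased rkB rkS) (hf : ¬ N.Terminal f)
    (hx : x ∈ Y) (hxf : N.buy x = f) (hS : ∃ y ∈ Y, N.sell y = f)
    (hmin : ∀ y ∈ Y, N.buy y = f → y ≠ x → rkB f x < rkB f y) : x ∈ N.C f Y := by
  obtain ⟨y, hy, hyf⟩ := hS
  have hk : 0 < min (Y ∩ N.XB f).card (Y ∩ N.XS f).card :=
    lt_min (card_pos.2 ⟨x, mem_inter.2 ⟨hx, mem_XB.2 hxf⟩⟩)
      (card_pos.2 ⟨y, mem_inter.2 ⟨hy, mem_XS.2 hyf⟩⟩)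
  refine (mem_inter.1 ((hFB.top_choice f hf Y).1.mem_of_forall_lt hk
    (mem_inter.2 ⟨hx, mem_XB.2 hxf⟩) fun z hz => ?_)).1
  exact hmin z (mem_inter.1 hz).1 (mem_XB.1 (mem_inter.1 hz).2)

lemma mem_C_of_sell_eq_of_forall_lt (hFB : N.FlowBased rkB rkS) (hf : ¬ N.Terminal f)
    (hx : x ∈ Y) (hxf : N.sell x = f) (hB : ∃ y ∈ Y, N.buy y = f)
    (hmin : ∀ y ∈ Y, N.sell y = f → y ≠ x → rkS f x < rkS f y) : x ∈ N.C f Y := by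
  obtain ⟨y, hy, hyf⟩ := hB
  have hk : 0 < min (Y ∩ N.XB f).card (Y ∩ N.XS f).card :=
    lt_min (card_pos.2 ⟨y, mem_inter.2 ⟨hy, mem_XB.2 hyf⟩⟩)
      (card_pos.2 ⟨x, mem_inter.2 ⟨hx, mem_XS.2 hxf⟩⟩)
  refine (mem_inter.1 ((hFB.top_choice f hf Y).2.mem_of_forall_lt hk
    (mem_inter.2 ⟨hx, mem_XS.2 hxf⟩) fun z hz => ?_)).1
  exact hmin z (mem_inter.1 hz).1 (mem_XS.1 (mem_inter.1 hz).2)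

lemma mem_C_of_card_eq (hFB : N.FlowBased rkB rkS) (hf : ¬ N.Terminal f)
    (hY : (Y ∩ N.XB f).card = (Y ∩ N.XS f).card) (hx : x ∈ Y)
    (hxf : N.sell x = f ∨ N.buy x = f) : x ∈ N.C f Y := by
  obtain ⟨hB, hS⟩ := hFB.top_choice f hf Y
  rw [← hY, min_self] at hB
  rw [hY, min_self] at hS
  rcases hxf with hxf | hxf
  · exact mem_of_mem_inter_left (hS.eq_of_card_eq.ge (mem_inter.2 ⟨hx, mem_XS.2 hxf⟩))
  · exact mem_of_mem_inter_left (hB.eq_of_card_eq.ge (mem_inter.2 ⟨hx, mem_XB.2 hxf⟩))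

lemma mem_C_of_terminal (hFB : N.FlowBased rkB rkS) (hf : N.Terminal f) (hx : x ∈ Y)
    (hxf : N.sell x = f ∨ N.buy x = f) : x ∈ N.C f Y := by
  rw [hFB.terminal_accepts f hf]
  exact mem_own.2 ⟨hx, hxf⟩

end FlowBased

lemma blockingPathOrCycle_of_forall_mem_C {F X : Type} [DecidableEq F] [DecidableEq X]
    {N : TradingNetwork F X} {A : Finset X} {l : List X} (hl : N.IsPath l ∨ N.IsCycle l)
    (hd : Disjoint l.toFinset A)
    (hC : ∀ x ∈ l, ∀ f, N.sell x = f ∨ N.buy x = f → x ∈ N.C f (N.own f A ∪ N.own f l.toFinset)) :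
    N.BlockingPathOrCycle A l :=
  ⟨hl, hd, fun f _ x hx => hC x (List.mem_toFinset.1 (mem_own.1 hx).1) f (mem_own.1 hx).2⟩

lemma IsCycle.map_buy {F X : Type} {N : TradingNetwork F X} {l : List X} (hl : N.IsCycle l) :
    l.map N.buy = (l.map N.sell).rotate 1 :=
  hl.2.1.map_eq_rotate_map hl.1 hl.2.2.2

section Cycles

variable {F X : Type} [DecidableEq F] [DecidableEq X] [Fintype X] {N : TradingNetwork F X}
  {A : Finset X} {l : List X}

lemma IsCycle.card_inter_XB_eq (hl : N.IsCycle l) (f : F) :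
    (l.toFinset ∩ N.XB f).card = (l.toFinset ∩ N.XS f).card := by
  have hnd : l.Nodup := hl.2.2.1.of_map
  have hcard (g : X → F) : (l.toFinset.filter (g · = f)).card = (l.map g).countP (· = f) := by
    have : l.toFinset.filter (g · = f) = (l.filter (g · = f)).toFinset := by ext; simp
    rw [this, List.toFinset_card_of_nodup (hnd.filter _), ← List.countP_eq_length_filter,
      List.countP_map]
    rfl
  have hXB : l.toFinset ∩ N.XB f = l.toFinset.filter (N.buy · = f) := by ext; simp
  have hXS : l.toFinset ∩ N.XS f = l.toFinset.filter (N.sell · = f) := by ext; simp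
  rw [hXB, hXS, hcard, hcard, hl.map_buy, (List.rotate_perm _ 1).countP_eq]

lemma IsCycle.blockingPathOrCycle {rkB rkS : F → X → ℕ} (hFB : N.FlowBased rkB rkS)
    (hl : N.IsCycle l) (hA : N.Acceptable A) (hd : Disjoint l.toFinset A)
    (hnt : ∀ x ∈ l, ¬ N.Terminal (N.sell x)) : N.BlockingPathOrCycle A l := by
  refine blockingPathOrCycle_of_forall_mem_C (Or.inr hl) hd fun x hx f hxf => ?_
  have hf : ¬ N.Terminal f := by
    rcases hxf with rfl | rfl
    · exact hnt x hx
    · have : N.buy x ∈ l.map N.sell := by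
        rw [← List.mem_rotate (n := 1), ← hl.map_buy]
        exact List.mem_map_of_mem hx
      obtain ⟨y, hy, hyx⟩ := List.mem_map.1 this
      exact hyx ▸ hnt y hy
  have hdB : Disjoint (A ∩ N.XB f) (l.toFinset ∩ N.XB f) :=
    hd.symm.mono inter_subset_left inter_subset_left
  have hdS : Disjoint (A ∩ N.XS f) (l.toFinset ∩ N.XS f) :=
    hd.symm.mono inter_subset_left inter_subset_left
  refine hFB.mem_C_of_card_eq hf ?_ (mem_union_right _ (mem_own.2 ⟨List.mem_toFinset.2 hx, hxf⟩))
    hxf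
  rw [own_union_own_inter_XB, own_union_own_inter_XS, card_union_of_disjoint hdB,
    card_union_of_disjoint hdS, hFB.card_inter_XB_eq hf (hA f), hl.card_inter_XB_eq]

end Cycles

end TradingNetwork

section GadgetFirms

variable {V : Type} {adj : V → V → Bool}

@[simp] lemma gadgetNet_sell (C : GFirm V → Finset (GContract V adj) → Finset (GContract V adj)) :
    (gadgetNet adj C).sell = gSell adj := rfl

@[simp] lemma gadgetNet_buy (C : GFirm V → Finset (GContract V adj) → Finset (GContract V adj)) :
    (gadgetNet adj C).buy = gBuy adj := rfl

@[simp] lemma gSell_inl (v : V) (i : Fin 8) :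
    gSell adj (Sum.inl (v, i)) = ![Sum.inl false, Sum.inr (v, 0), Sum.inr (v, 0), Sum.inr (v, 1),
      Sum.inr (v, 3), Sum.inr (v, 2), Sum.inr (v, 4), Sum.inr (v, 5)] i := rfl

@[simp] lemma gBuy_inl (v : V) (i : Fin 8) :
    gBuy adj (Sum.inl (v, i)) = ![Sum.inr (v, 0), Sum.inr (v, 1), Sum.inr (v, 3), Sum.inr (v, 2),
      Sum.inr (v, 4), Sum.inr (v, 5), Sum.inr (v, 5), Sum.inl true] i := rfl

/-- The firm `a_v` (for `t = false`) or `b_v` (for `t = true`). -/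
def inFirm (t : Bool) (v : V) : GFirm V := Sum.inr (v, if t then 3 else 1)

/-- The firm `a'_v` (for `t = false`) or `b'_v` (for `t = true`). -/
def outFirm (t : Bool) (v : V) : GFirm V := Sum.inr (v, if t then 4 else 2)

/-- The contract `a_v a'_v` (for `t = false`) or `b_v b'_v` (for `t = true`). -/
def midContract (t : Bool) (v : V) : GContract V adj := Sum.inl (v, if t then 4 else 3)

@[simp] lemma gSell_midContract (t : Bool) (v : V) :
    gSell adj (midContract t v) = inFirm t v := by cases t <;> rfl

@[simp] lemma gBuy_midContract (t : Bool) (v : V) :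
    gBuy adj (midContract t v) = outFirm t v := by cases t <;> rfl

@[simp] lemma gSell_arc (q : {p : V × V // adj p.1 p.2 = true}) (t : Bool) :
    gSell adj (Sum.inr (q, t)) = outFirm t q.1.1 := by
  obtain ⟨⟨u, w⟩, h⟩ := q; cases t <;> rfl

@[simp] lemma gBuy_arc (q : {p : V × V // adj p.1 p.2 = true}) (t : Bool) :
    gBuy adj (Sum.inr (q, t)) = inFirm t q.1.2 := by
  obtain ⟨⟨u, w⟩, h⟩ := q; cases t <;> rfl

@[simp] lemma inFirm_inj {t : Bool} {v w : V} : inFirm t v = inFirm t w ↔ v = w := by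
  cases t <;> simp [inFirm]

@[simp] lemma outFirm_inj {t : Bool} {v w : V} : outFirm t v = outFirm t w ↔ v = w := by
  cases t <;> simp [outFirm]

@[simp] lemma inFirm_ne_outFirm {t : Bool} {v w : V} : inFirm t v ≠ outFirm t w := by
  cases t <;> simp [inFirm, outFirm]

@[simp] lemma outFirm_ne_inFirm {t : Bool} {v w : V} : outFirm t v ≠ inFirm t w :=
  inFirm_ne_outFirm.symm

variable {x : GContract V adj} {v : V}

lemma gBuy_ne_source : gBuy adj x ≠ Sum.inl false := by
  rcases x with ⟨w, i⟩ | ⟨q, _ | _⟩ <;> [fin_cases i; skip; skip] <;> simp [inFirm]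

lemma gSell_ne_sink : gSell adj x ≠ Sum.inl true := by
  rcases x with ⟨w, i⟩ | ⟨q, _ | _⟩ <;> [fin_cases i; skip; skip] <;> simp [outFirm]

lemma eq_of_gBuy_eq_sv (h : gBuy adj x = Sum.inr (v, 0)) : x = Sum.inl (v, 0) := by
  rcases x with ⟨w, i⟩ | ⟨q, _ | _⟩ <;> [fin_cases i; skip; skip] <;> simp_all [inFirm]

lemma eq_or_eq_of_gSell_eq_sv (h : gSell adj x = Sum.inr (v, 0)) :
    x = Sum.inl (v, 1) ∨ x = Sum.inl (v, 2) := by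
  rcases x with ⟨w, i⟩ | ⟨q, _ | _⟩ <;> [fin_cases i; skip; skip] <;> simp_all [outFirm]

lemma eq_of_gBuy_eq_av (hx : x.isLeft) (h : gBuy adj x = Sum.inr (v, 1)) :
    x = Sum.inl (v, 1) := by
  rcases x with ⟨w, i⟩ | _ <;> [fin_cases i; skip] <;> simp_all

lemma eq_of_gSell_eq_av (h : gSell adj x = Sum.inr (v, 1)) : x = Sum.inl (v, 3) := by
  rcases x with ⟨w, i⟩ | ⟨q, _ | _⟩ <;> [fin_cases i; skip; skip] <;> simp_all [outFirm]

lemma eq_of_gBuy_eq_bv (hx : x.isLeft) (h : gBuy adj x = Sum.inr (v, 3)) :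
    x = Sum.inl (v, 2) := by
  rcases x with ⟨w, i⟩ | _ <;> [fin_cases i; skip] <;> simp_all

lemma eq_of_gBuy_eq_bv' (h : gBuy adj x = Sum.inr (v, 4)) : x = Sum.inl (v, 4) := by
  rcases x with ⟨w, i⟩ | ⟨q, _ | _⟩ <;> [fin_cases i; skip; skip] <;> simp_all [inFirm]

lemma eq_of_gSell_eq_bv' (hx : x.isLeft) (h : gSell adj x = Sum.inr (v, 4)) :
    x = Sum.inl (v, 6) := by
  rcases x with ⟨w, i⟩ | _ <;> [fin_cases i; skip] <;> simp_all

lemma eq_or_eq_of_gBuy_eq_tv (h : gBuy adj x = Sum.inr (v, 5)) :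
    x = Sum.inl (v, 5) ∨ x = Sum.inl (v, 6) := by
  rcases x with ⟨w, i⟩ | ⟨q, _ | _⟩ <;> [fin_cases i; skip; skip] <;> simp_all [inFirm]

lemma eq_of_gSell_eq_tv (h : gSell adj x = Sum.inr (v, 5)) : x = Sum.inl (v, 7) := by
  rcases x with ⟨w, i⟩ | ⟨q, _ | _⟩ <;> [fin_cases i; skip; skip] <;> simp_all [outFirm]

end GadgetFirms

section GadgetCycles

variable {V : Type} {adj : V → V → Bool}

/-- The contracts `x_{v_1} x'_{v_1}, x'_{v_1} x_{v_2}, x_{v_2} x'_{v_2}, …` along a list of arcs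
`v_1 v_2, v_2 v_3, …`, where `x = a` for `t = false` and `x = b` for `t = true`. -/
def arcCycle (t : Bool) : List {p : V × V // adj p.1 p.2 = true} → List (GContract V adj)
  | [] => []
  | q :: qs => midContract t q.1.1 :: Sum.inr (q, t) :: arcCycle t qs

variable {t : Bool} {qs : List {p : V × V // adj p.1 p.2 = true}}

lemma mem_arcCycle {x : GContract V adj} :
    x ∈ arcCycle t qs ↔ ∃ q ∈ qs, x = midContract t q.1.1 ∨ x = Sum.inr (q, t) := by
  induction qs with
  | nil => simp [arcCycle]
  | cons q qs ih => simp [arcCycle, ih, or_assoc]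

lemma isChain_arcCycle (h : qs.IsChain fun q q' => q.1.2 = q'.1.1) :
    (arcCycle t qs).IsChain fun x y => gBuy adj x = gSell adj y := by
  induction qs with
  | nil => simp [arcCycle]
  | cons q qs ih =>
    cases qs with
    | nil => simp [arcCycle]
    | cons q' qs =>
      obtain ⟨hqq', h⟩ := List.isChain_cons_cons.1 h
      exact List.isChain_cons_cons.2 ⟨by simp, List.isChain_cons_cons.2 ⟨by simp [hqq'], ih h⟩⟩

lemma nodup_map_gSell_arcCycle (h : (qs.map (·.1.1)).Nodup) :
    ((arcCycle t qs).map (gSell adj)).Nodup := by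
  induction qs with
  | nil => simp [arcCycle]
  | cons q qs ih =>
    simp only [arcCycle, List.map_cons, List.nodup_cons, List.mem_cons, List.mem_map,
      mem_arcCycle] at h ⊢
    refine ⟨?_, ?_, ih h.2⟩
    · rintro (he | ⟨_, ⟨q', hq', rfl | rfl⟩, he⟩) <;> simp at he
      exact h.1 ⟨q', hq', he⟩
    · rintro ⟨_, ⟨q', hq', rfl | rfl⟩, he⟩ <;> simp at he
      exact h.1 ⟨q', hq', he⟩

lemma head_arcCycle (h : qs ≠ []) (h' : arcCycle t qs ≠ []) :
    (arcCycle t qs).head h' = midContract t (qs.head h).1.1 := by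
  obtain ⟨q, qs, rfl⟩ := List.exists_cons_of_ne_nil h
  rfl

lemma getLast_arcCycle (h : qs ≠ []) (h' : arcCycle t qs ≠ []) :
    (arcCycle t qs).getLast h' = Sum.inr (qs.getLast h, t) := by
  induction qs with
  | nil => exact absurd rfl h
  | cons q qs ih =>
    cases qs with
    | nil => rfl
    | cons q' qs =>
      simp only [arcCycle, List.getLast_cons (List.cons_ne_nil _ _)]
      exact ih (List.cons_ne_nil _ _) (by simp [arcCycle])

lemma isCycle_arcCycle (C : GFirm V → Finset (GContract V adj) → Finset (GContract V adj))
    (h : qs ≠ []) (hnd : (qs.map (·.1.1)).Nodup) (hch : qs.IsChain fun q q' => q.1.2 = q'.1.1)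
    (hcl : (qs.getLast h).1.2 = (qs.head h).1.1) : (gadgetNet adj C).IsCycle (arcCycle t qs) := by
  have h' : arcCycle t qs ≠ [] := by
    obtain ⟨q, qs, rfl⟩ := List.exists_cons_of_ne_nil h
    simp [arcCycle]
  refine ⟨h', isChain_arcCycle hch, nodup_map_gSell_arcCycle hnd, ?_⟩
  simp [getLast_arcCycle h, head_arcCycle h, hcl]

lemma exists_arcs_of_isChain {u w : V} {vs : List V} (hch : (u :: vs).IsChain (adj · · = true))
    (hw : adj ((u :: vs).getLast (List.cons_ne_nil _ _)) w = true) :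
    ∃ qs : List {p : V × V // adj p.1 p.2 = true}, ∃ h : qs ≠ [], qs.map (·.1.1) = u :: vs ∧
      (qs.IsChain fun q q' => q.1.2 = q'.1.1) ∧ (qs.getLast h).1.2 = w := by
  induction vs generalizing u with
  | nil => exact ⟨[⟨(u, w), hw⟩], List.cons_ne_nil _ _, rfl, List.isChain_singleton _, rfl⟩
  | cons v vs ih =>
    obtain ⟨huv, hch⟩ := List.isChain_cons_cons.1 hch
    rw [List.getLast_cons (List.cons_ne_nil _ _)] at hw
    obtain ⟨qs, h, hmap, hchq, hlast⟩ := ih hch hw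
    obtain ⟨q, qs, rfl⟩ := List.exists_cons_of_ne_nil h
    refine ⟨⟨(u, v), huv⟩ :: q :: qs, List.cons_ne_nil _ _, by simp [hmap],
      List.isChain_cons_cons.2 ⟨(List.cons.inj hmap).1.symm, hchq⟩, ?_⟩
    rwa [List.getLast_cons (List.cons_ne_nil _ _)]

end GadgetCycles

section GadgetNetwork

open TradingNetwork

variable {V : Type} [DecidableEq V] [Fintype V] {adj : V → V → Bool}
  {C : GFirm V → Finset (GContract V adj) → Finset (GContract V adj)}
  {rkB rkS : GFirm V → GContract V adj → ℕ} {A Y : Finset (GContract V adj)} {v : V}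

lemma gadgetNet_not_terminal (v : V) (i : Fin 6) :
    ¬ (gadgetNet adj C).Terminal (Sum.inr (v, i)) := by
  have hB : gBuy adj (Sum.inl (v, ![0, 1, 3, 2, 4, 5] i)) = Sum.inr (v, i) := by
    fin_cases i <;> rfl
  have hS : gSell adj (Sum.inl (v, ![1, 3, 5, 4, 6, 7] i)) = Sum.inr (v, i) := by
    fin_cases i <;> rfl
  rintro (h | h)
  · exact eq_empty_iff_forall_notMem.1 h (Sum.inl (v, _)) (mem_XB.2 hB)
  · exact eq_empty_iff_forall_notMem.1 h (Sum.inl (v, _)) (mem_XS.2 hS)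

lemma gadgetNet_terminal_source : (gadgetNet adj C).Terminal (Sum.inl false) :=
  Or.inl (eq_empty_iff_forall_notMem.2 fun _ hx => gBuy_ne_source (mem_XB.1 hx))

lemma gadgetNet_terminal_sink : (gadgetNet adj C).Terminal (Sum.inl true) :=
  Or.inr (eq_empty_iff_forall_notMem.2 fun _ hx => gSell_ne_sink (mem_XS.1 hx))

lemma sv_chooses_sv_av (hFB : (gadgetNet adj C).FlowBased rkB rkS)
    (hpref : GadgetPrefs adj C rkB rkS) (h0 : Sum.inl (v, 0) ∈ Y) (h1 : Sum.inl (v, 1) ∈ Y) :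
    Sum.inl (v, 1) ∈ (gadgetNet adj C).C (Sum.inr (v, 0)) Y := by
  refine hFB.mem_C_of_sell_eq_of_forall_lt (gadgetNet_not_terminal v 0) h1 rfl ⟨_, h0, rfl⟩
    fun y _ hy hne => ?_
  rcases eq_or_eq_of_gSell_eq_sv hy with rfl | rfl
  exacts [absurd rfl hne, hpref.sv_pref v]

lemma sv_chooses_s_sv (hFB : (gadgetNet adj C).FlowBased rkB rkS)
    (h0 : Sum.inl (v, 0) ∈ Y) (h1 : Sum.inl (v, 1) ∈ Y) :
    Sum.inl (v, 0) ∈ (gadgetNet adj C).C (Sum.inr (v, 0)) Y :=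
  hFB.mem_C_of_buy_eq_of_forall_lt (gadgetNet_not_terminal v 0) h0 rfl ⟨_, h1, rfl⟩
    fun _ _ hy hne => absurd (eq_of_gBuy_eq_sv hy) hne

lemma av_chooses_sv_av (hFB : (gadgetNet adj C).FlowBased rkB rkS)
    (hpref : GadgetPrefs adj C rkB rkS) (h1 : Sum.inl (v, 1) ∈ Y) (h3 : Sum.inl (v, 3) ∈ Y) :
    Sum.inl (v, 1) ∈ (gadgetNet adj C).C (Sum.inr (v, 1)) Y := by
  refine hFB.mem_C_of_buy_eq_of_forall_lt (gadgetNet_not_terminal v 1) h1 rfl ⟨_, h3, rfl⟩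
    fun y _ hy hne => ?_
  rcases y with y | y
  · exact absurd (eq_of_gBuy_eq_av (x := Sum.inl y) rfl hy) hne
  · exact hpref.nonZ_first_B _ (Sum.inl (v, 1)) (mem_XB.2 rfl) (Sum.inr y) (mem_XB.2 hy) rfl rfl

lemma bv'_chooses_bv'_tv (hFB : (gadgetNet adj C).FlowBased rkB rkS)
    (hpref : GadgetPrefs adj C rkB rkS) (h4 : Sum.inl (v, 4) ∈ Y) (h6 : Sum.inl (v, 6) ∈ Y) :
    Sum.inl (v, 6) ∈ (gadgetNet adj C).C (Sum.inr (v, 4)) Y := by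
  refine hFB.mem_C_of_sell_eq_of_forall_lt (gadgetNet_not_terminal v 4) h6 rfl ⟨_, h4, rfl⟩
    fun y _ hy hne => ?_
  rcases y with y | y
  · exact absurd (eq_of_gSell_eq_bv' (x := Sum.inl y) rfl hy) hne
  · exact hpref.nonZ_first_S _ (Sum.inl (v, 6)) (mem_XS.2 rfl) (Sum.inr y) (mem_XS.2 hy) rfl rfl

lemma tv_chooses_bv'_tv (hFB : (gadgetNet adj C).FlowBased rkB rkS)
    (hpref : GadgetPrefs adj C rkB rkS) (h6 : Sum.inl (v, 6) ∈ Y) (h7 : Sum.inl (v, 7) ∈ Y) :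
    Sum.inl (v, 6) ∈ (gadgetNet adj C).C (Sum.inr (v, 5)) Y := by
  refine hFB.mem_C_of_buy_eq_of_forall_lt (gadgetNet_not_terminal v 5) h6 rfl ⟨_, h7, rfl⟩
    fun y _ hy hne => ?_
  rcases eq_or_eq_of_gBuy_eq_tv hy with rfl | rfl
  exacts [hpref.tv_pref v, absurd rfl hne]

lemma tv_chooses_tv_t (hFB : (gadgetNet adj C).FlowBased rkB rkS)
    (h6 : Sum.inl (v, 6) ∈ Y) (h7 : Sum.inl (v, 7) ∈ Y) :
    Sum.inl (v, 7) ∈ (gadgetNet adj C).C (Sum.inr (v, 5)) Y :=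
  hFB.mem_C_of_sell_eq_of_forall_lt (gadgetNet_not_terminal v 5) h7 rfl ⟨_, h6, rfl⟩
    fun _ _ hy hne => absurd (eq_of_gSell_eq_tv hy) hne

lemma arc_false_not_mem (hFB : (gadgetNet adj C).FlowBased rkB rkS)
    (hpref : GadgetPrefs adj C rkB rkS) (hAcc : (gadgetNet adj C).Acceptable A)
    (hnoblock : ¬ ∃ l, (gadgetNet adj C).BlockingPathOrCycle A l)
    (q : {p : V × V // adj p.1 p.2 = true}) : Sum.inr (q, false) ∉ A := by
  intro hz
  obtain ⟨⟨u, v⟩, huv⟩ := q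
  have hav := gadgetNet_not_terminal (C := C) v 1
  obtain ⟨y, hyA, hy⟩ := hFB.exists_sell_eq_of_buy_eq hav hAcc hz rfl
  have h3 : Sum.inl (v, 3) ∈ A := eq_of_gSell_eq_av hy ▸ hyA
  have h1 : Sum.inl (v, 1) ∉ A := fun h1 =>
    Sum.inl_ne_inr (hFB.eq_of_buy_eq hav hAcc (fun _ hz => eq_of_gSell_eq_av hz) h1 hz rfl rfl)
  have hchosen (L : Finset (GContract V adj)) (hL1 : Sum.inl (v, 1) ∈ L)
      (hL0 : Sum.inl (v, 0) ∈ A ∪ L) (f : GFirm V)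
      (hf : gSell adj (Sum.inl (v, 1)) = f ∨ gBuy adj (Sum.inl (v, 1)) = f) :
      Sum.inl (v, 1) ∈
        (gadgetNet adj C).C f ((gadgetNet adj C).own f A ∪ (gadgetNet adj C).own f L) := by
    rcases hf with rfl | rfl
    · refine sv_chooses_sv_av hFB hpref ?_ (by simp [hL1])
      rcases mem_union.1 hL0 with h | h <;> simp [h]
    · exact av_chooses_sv_av hFB hpref (by simp [hL1]) (by simp [h3])
  by_cases h0 : Sum.inl (v, 0) ∈ A
  · refine hnoblock ⟨[Sum.inl (v, 1)], blockingPathOrCycle_of_forall_mem_C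
      (Or.inl ⟨List.cons_ne_nil _ _, List.isChain_singleton _, by simp⟩) ?_ ?_⟩
    · simpa using h1
    · simp only [List.mem_singleton, gadgetNet_sell, gadgetNet_buy]
      rintro x rfl
      exact hchosen _ (by simp) (by simp [h0])
  · refine hnoblock ⟨[Sum.inl (v, 0), Sum.inl (v, 1)], blockingPathOrCycle_of_forall_mem_C
      (Or.inl ⟨List.cons_ne_nil _ _, List.isChain_pair.2 rfl, by simp⟩) ?_ ?_⟩
    · simp [h0, h1]
    · simp only [List.mem_cons, gadgetNet_sell, gadgetNet_buy]
      rintro x (rfl | rfl | h) f hf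
      · rcases hf with rfl | rfl
        · exact hFB.mem_C_of_terminal gadgetNet_terminal_source (by simp) (Or.inl rfl)
        · exact sv_chooses_s_sv hFB (by simp) (by simp)
      · exact hchosen _ (by simp) (by simp) f hf
      · simp at h

lemma arc_true_not_mem (hFB : (gadgetNet adj C).FlowBased rkB rkS)
    (hpref : GadgetPrefs adj C rkB rkS) (hAcc : (gadgetNet adj C).Acceptable A)
    (hnoblock : ¬ ∃ l, (gadgetNet adj C).BlockingPathOrCycle A l)
    (q : {p : V × V // adj p.1 p.2 = true}) : Sum.inr (q, true) ∉ A := by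
  intro hz
  obtain ⟨⟨u, v⟩, huv⟩ := q
  have hbu := gadgetNet_not_terminal (C := C) u 4
  obtain ⟨y, hyA, hy⟩ := hFB.exists_buy_eq_of_sell_eq hbu hAcc hz rfl
  have h4 : Sum.inl (u, 4) ∈ A := eq_of_gBuy_eq_bv' hy ▸ hyA
  have h6 : Sum.inl (u, 6) ∉ A := fun h6 =>
    Sum.inl_ne_inr (hFB.eq_of_sell_eq hbu hAcc (fun _ hz => eq_of_gBuy_eq_bv' hz) h6 hz rfl rfl)
  have hchosen (L : Finset (GContract V adj)) (hL6 : Sum.inl (u, 6) ∈ L)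
      (hL7 : Sum.inl (u, 7) ∈ A ∪ L) (f : GFirm V)
      (hf : gSell adj (Sum.inl (u, 6)) = f ∨ gBuy adj (Sum.inl (u, 6)) = f) :
      Sum.inl (u, 6) ∈
        (gadgetNet adj C).C f ((gadgetNet adj C).own f A ∪ (gadgetNet adj C).own f L) := by
    rcases hf with rfl | rfl
    · exact bv'_chooses_bv'_tv hFB hpref (by simp [h4]) (by simp [hL6])
    · refine tv_chooses_bv'_tv hFB hpref (by simp [hL6]) ?_
      rcases mem_union.1 hL7 with h | h <;> simp [h]
  by_cases h7 : Sum.inl (u, 7) ∈ A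
  · refine hnoblock ⟨[Sum.inl (u, 6)], blockingPathOrCycle_of_forall_mem_C
      (Or.inl ⟨List.cons_ne_nil _ _, List.isChain_singleton _, by simp⟩) ?_ ?_⟩
    · simpa using h6
    · simp only [List.mem_singleton, gadgetNet_sell, gadgetNet_buy]
      rintro x rfl
      exact hchosen _ (by simp) (by simp [h7])
  · refine hnoblock ⟨[Sum.inl (u, 6), Sum.inl (u, 7)], blockingPathOrCycle_of_forall_mem_C
      (Or.inl ⟨List.cons_ne_nil _ _, List.isChain_pair.2 rfl, by simp⟩) ?_ ?_⟩
    · simp [h6, h7]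
    · simp only [List.mem_cons, gadgetNet_sell, gadgetNet_buy]
      rintro x (rfl | rfl | h) f hf
      · exact hchosen _ (by simp) (by simp) f hf
      · rcases hf with rfl | rfl
        · exact tv_chooses_tv_t hFB (by simp) (by simp)
        · exact hFB.mem_C_of_terminal gadgetNet_terminal_sink (by simp) (Or.inr rfl)
      · simp at h

lemma not_hasCycleIn_of_midContract_not_mem (hFB : (gadgetNet adj C).FlowBased rkB rkS)
    (hAcc : (gadgetNet adj C).Acceptable A) (hZ : ∀ z, Sum.inr z ∉ A)
    (hnoblock : ¬ ∃ l, (gadgetNet adj C).BlockingPathOrCycle A l) (t : Bool) {U : Finset V}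
    (hU : ∀ v ∈ U, midContract t v ∉ A) : ¬ HasCycleIn adj U := by
  rintro ⟨vs, hne, hnd, hvU, hch, hcl⟩
  obtain ⟨u, vs, rfl⟩ := List.exists_cons_of_ne_nil hne
  obtain ⟨qs, hqs, hmap, hchq, hlast⟩ := exists_arcs_of_isChain hch hcl
  have hhead : (qs.head hqs).1.1 = u := by
    obtain ⟨q, qs, rfl⟩ := List.exists_cons_of_ne_nil hqs
    exact (List.cons.inj hmap).1
  refine hnoblock ⟨arcCycle t qs, (isCycle_arcCycle C hqs (hmap ▸ hnd) hchq
    (hlast.trans hhead.symm)).blockingPathOrCycle hFB hAcc ?_ ?_⟩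
  · refine disjoint_left.2 fun x hx hxA => ?_
    obtain ⟨q, hq, rfl | rfl⟩ := mem_arcCycle.1 (List.mem_toFinset.1 hx)
    · exact hU _ (hvU _ (hmap ▸ List.mem_map_of_mem hq)) hxA
    · exact hZ _ hxA
  · intro x hx
    obtain ⟨q, hq, rfl | rfl⟩ := mem_arcCycle.1 hx <;> cases t <;>
      exact gadgetNet_not_terminal _ _

lemma bv_bv'_not_mem (hFB : (gadgetNet adj C).FlowBased rkB rkS)
    (hAcc : (gadgetNet adj C).Acceptable A) (hZ : ∀ z, Sum.inr z ∉ A) {v : V}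
    (h3 : Sum.inl (v, 3) ∈ A) : Sum.inl (v, 4) ∉ A := by
  have isLeft_of_mem {x : GContract V adj} (hx : x ∈ A) : x.isLeft := by
    cases x
    exacts [rfl, absurd hx (hZ _)]
  obtain ⟨y, hyA, hy⟩ := hFB.exists_buy_eq_of_sell_eq (gadgetNet_not_terminal v 1) hAcc h3 rfl
  have h1 : Sum.inl (v, 1) ∈ A := eq_of_gBuy_eq_av (isLeft_of_mem hyA) hy ▸ hyA
  have h2 : Sum.inl (v, 2) ∉ A := fun h2 => by
    have := hFB.eq_of_sell_eq (gadgetNet_not_terminal v 0) hAcc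
      (fun _ hz => eq_of_gBuy_eq_sv hz) h1 h2 rfl rfl
    simp at this
  intro h4
  obtain ⟨y, hyA, hy⟩ := hFB.exists_buy_eq_of_sell_eq (gadgetNet_not_terminal v 3) hAcc h4 rfl
  exact h2 (eq_of_gBuy_eq_bv (isLeft_of_mem hyA) hy ▸ hyA)

end GadgetNetwork

/-- If an acceptable outcome `A` of the gadget network admits no blocking
path and no blocking cycle, then `A` contains no arc (`Z`) contract and the vertex sets
`Q = {v : a_v a'_v ∉ A}` and `Qᶜ` are both acyclic in the digraph. -/
theorem gadget_unblocked_partition {V : Type} [DecidableEq V] [Fintype V]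
    (adj : V → V → Bool)
    (C : GFirm V → Finset (GContract V adj) → Finset (GContract V adj))
    (rkB rkS : GFirm V → GContract V adj → ℕ)
    (hN : (gadgetNet adj C).IsFlowNetwork rkB rkS)
    (hpref : GadgetPrefs adj C rkB rkS)
    (A : Finset (GContract V adj))
    (hAcc : (gadgetNet adj C).Acceptable A)
    (hnoblock : ¬ ∃ l, (gadgetNet adj C).BlockingPathOrCycle A l) :
    (∀ z : ({p : V × V // adj p.1 p.2 = true}) × Bool, Sum.inr z ∉ A) ∧
    ¬ HasCycleIn adj (Finset.univ.filter fun v => Sum.inl (v, 3) ∉ A) ∧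
    ¬ HasCycleIn adj (Finset.univ.filter fun v => Sum.inl (v, 3) ∉ A)ᶜ := by
  obtain ⟨-, hFB, -⟩ := hN
  have hZ : ∀ z : ({p : V × V // adj p.1 p.2 = true}) × Bool, Sum.inr z ∉ A := by
    rintro ⟨q, _ | _⟩
    exacts [arc_false_not_mem hFB hpref hAcc hnoblock q,
      arc_true_not_mem hFB hpref hAcc hnoblock q]
  refine ⟨hZ, not_hasCycleIn_of_midContract_not_mem hFB hAcc hZ hnoblock false fun v hv => ?_,
    not_hasCycleIn_of_midContract_not_mem hFB hAcc hZ hnoblock true fun v hv => ?_⟩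
  · exact (mem_filter.1 hv).2
  · exact bv_bv'_not_mem hFB hAcc hZ (by simpa using hv)
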